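/- Let c > 0 be an absolute constant and let 𝒟 be a distribution on ℝ^d with mean zero and positive definite covariance Σ̃ satisfying the C_HW-Hanson–Wright property with C_HW = O(1), and suppose erk(Σ̃) := Tr(Σ̃)/‖Σ̃‖ ≥ c·d. Then for every even p ∈ ℕ, (E_{x∼𝒟} |‖x‖² − Tr(Σ̃)|^p)^{1/p} ≤ O(Tr(Σ̃)·p/√d). -/

import Mathlib

open MeasureTheory ProbabilityTheory Matrix Finset Real Filter

noncomputable section

namespace Paper

variable {d n : ℕ}

/-- Spectral (operator) norm of a matrix. -/
def specNorm (A : Matrix (Fin d) (Fin d) ℝ) : ℝ :=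
  ‖LinearMap.toContinuousLinearMap (Matrix.toEuclideanLin A)‖

/-- Frobenius norm of a matrix. -/
def frobNorm (A : Matrix (Fin d) (Fin d) ℝ) : ℝ :=
  Real.sqrt (∑ i, ∑ j, (A i j) ^ 2)

/-- Effective rank. -/
def erk (A : Matrix (Fin d) (Fin d) ℝ) : ℝ := A.trace / specNorm A

open Classical in
/-- Positive semidefinite square root (junk value `0` if not psd). -/
def matSqrt (A : Matrix (Fin d) (Fin d) ℝ) : Matrix (Fin d) (Fin d) ℝ :=
  if h : A.PosSemidef then h.1.eigenvectorUnitary.1 * diagonal (Real.sqrt ∘ h.1.eigenvalues) *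
    (star h.1.eigenvectorUnitary : Matrix (Fin d) (Fin d) ℝ) else 0

/-- Inverse of the positive semidefinite square root. -/
def invSqrt (A : Matrix (Fin d) (Fin d) ℝ) : Matrix (Fin d) (Fin d) ℝ := (matSqrt A)⁻¹

/-- Standard Gaussian measure on ℝ^d. -/
def stdGaussian (d : ℕ) : Measure (Fin d → ℝ) :=
  Measure.pi fun _ => gaussianReal 0 1

/-- Centered Gaussian measure with covariance S. -/
def gaussianOf (S : Matrix (Fin d) (Fin d) ℝ) : Measure (Fin d → ℝ) :=
  (stdGaussian d).map (matSqrt S).mulVec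

/-- Spatial sign (projection on the sphere of radius √d). -/
def spSign (d : ℕ) (x : Fin d → ℝ) : Fin d → ℝ :=
  fun i => Real.sqrt d * x i / Real.sqrt (∑ j, (x j) ^ 2)

/-- Truncated spatial sign with threshold Δ. -/
def truncSign (d : ℕ) (Δ : ℝ) (x : Fin d → ℝ) : Fin d → ℝ :=
  if (∑ i, (x i) ^ 2) < (d : ℝ) - Δ then fun i => Real.sqrt ((d : ℝ) / ((d : ℝ) - Δ)) * x i
  else if (d : ℝ) + Δ < (∑ i, (x i) ^ 2) then fun i => Real.sqrt ((d : ℝ) / ((d : ℝ) + Δ)) * x i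
  else spSign d x

/-- Mean vector of a measure on ℝ^d. -/
def meanVec (μ : Measure (Fin d → ℝ)) : Fin d → ℝ := fun i => ∫ x, x i ∂μ

/-- Covariance matrix of a measure on ℝ^d. -/
def covMatrix (μ : Measure (Fin d → ℝ)) : Matrix (Fin d) (Fin d) ℝ :=
  Matrix.of fun i j => ∫ x, (x i - meanVec μ i) * (x j - meanVec μ j) ∂μ

/-- Inner product of vectors indexed by `ι`. -/
def inner1 {ι : Type*} [Fintype ι] (v x : ι → ℝ) : ℝ := ∑ j, v j * x j

/-- Inner product of "matrices" indexed by `ι × ι`. -/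
def innerM {ι : Type*} [Fintype ι] (P Q : ι → ι → ℝ) : ℝ := ∑ j, ∑ k, P j k * Q j k

/-- Outer product. -/
def outer {ι : Type*} (x y : ι → ℝ) : ι → ι → ℝ := fun j k => x j * y k

/-- sup_{v ∈ V} ⟨v, a⟩². -/
def supInner {ι : Type*} [Fintype ι] (V : Set (ι → ℝ)) (a : ι → ℝ) : ℝ :=
  sSup ((fun v => (inner1 v a) ^ 2) '' V)

/-- Generalized stability (Definition 4 of the paper). -/
def IsStable {ι : Type*} [Fintype ι] (x : Fin n → ι → ℝ) (ε δ r : ℝ)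
    (V : Set (ι → ℝ)) (P : Set (ι → ι → ℝ)) (μ : ι → ℝ) (Q : ι → ι → ℝ) : Prop :=
  ∀ v ∈ V, ∀ p ∈ P, ∀ M : Finset (Fin n), (1 - ε) * (n : ℝ) ≤ (M.card : ℝ) →
    |(M.card : ℝ)⁻¹ * ∑ i ∈ M, inner1 v (fun j => x i j - μ j)| ≤ δ ∧
    |(M.card : ℝ)⁻¹ * ∑ i ∈ M, innerM p (outer (fun j => x i j - μ j) (fun j => x i j - μ j))
        - innerM p Q| ≤ δ ^ 2 / ε ∧
    |innerM p Q| ≤ r ^ 2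

/-- 𝒱 ⊗ 𝒱 ⊆ 𝒫. -/
def TensorSub {ι : Type*} (V : Set (ι → ℝ)) (P : Set (ι → ι → ℝ)) : Prop :=
  ∀ v ∈ V, ∀ v' ∈ V, outer v v' ∈ P

/-- Adequacy of 𝒫 with respect to 𝒱. -/
def Adequate {ι : Type*} [Fintype ι] (V : Set (ι → ℝ)) (P : Set (ι → ι → ℝ)) : Prop :=
  (∀ a : ι → ℝ, ∀ p ∈ P, 0 ≤ innerM p (outer a a)) ∧
  (∀ a b : ι → ℝ, ∀ p ∈ P, (innerM p (outer a b)) ^ 2 ≤ supInner V a * supInner V b)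

/-- The weight set 𝒲_ε. -/
def weightSet (n : ℕ) (ε : ℝ) : Set (Fin n → ℝ) :=
  {w | (∀ i, 0 ≤ w i ∧ w i ≤ 1 / (n : ℝ)) ∧ 1 - ε ≤ ∑ i, w i}

/-- Weighted mean μ_w. -/
def wMean {ι : Type*} (w : Fin n → ℝ) (x : Fin n → ι → ℝ) : ι → ℝ :=
  fun j => (∑ i, w i)⁻¹ * ∑ i, w i * x i j

/-- Weighted covariance Σ_w. -/
def wCov {ι : Type*} (w : Fin n → ℝ) (x : Fin n → ι → ℝ) : ι → ι → ℝ :=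
  fun j k => (∑ i, w i)⁻¹ * ∑ i, w i * (x i j - wMean w x j) * (x i k - wMean w x k)

/-- A d×d matrix viewed as a vector in ℝ^{d²}. -/
def mvec (A : Matrix (Fin d) (Fin d) ℝ) : Fin d × Fin d → ℝ := fun p => A p.1 p.2

/-- Id_d as a vector in ℝ^{d²}. -/
def idVec (d : ℕ) : Fin d × Fin d → ℝ := fun p => if p.1 = p.2 then 1 else 0

/-- 2·Id_{d²}. -/
def twoId (d : ℕ) : (Fin d × Fin d) → (Fin d × Fin d) → ℝ :=
  fun p q => if p = q then 2 else 0

/-- The Frobenius-norm ball ℬ_R (as vectors in ℝ^{d²}). -/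
def ballF (d : ℕ) (R : ℝ) : Set (Fin d × Fin d → ℝ) :=
  {V | ∑ p : Fin d × Fin d, (V p) ^ 2 ≤ R ^ 2}

/-- ℬ_R ⊗ ℬ_R. -/
def ballFT (d : ℕ) (R : ℝ) : Set ((Fin d × Fin d) → (Fin d × Fin d) → ℝ) :=
  {P | ∃ V ∈ ballF d R, ∃ W ∈ ballF d R, P = outer V W}

/-- 𝒮_R = {uuᵀ : ‖u‖ ≤ √R}. -/
def sphereSet (d : ℕ) (R : ℝ) : Set (Fin d × Fin d → ℝ) :=
  {V | ∃ u : Fin d → ℝ, (∑ i, (u i) ^ 2) ≤ R ∧ V = fun p => u p.1 * u p.2}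

/-- 𝒫_R: the set of degree-4 pseudo-expectation moment matrices Ẽ[v^{⊗4}]
under the constraint ‖v‖² ≤ R. -/
def pseudoSet (d : ℕ) (R : ℝ) : Set ((Fin d × Fin d) → (Fin d × Fin d) → ℝ) :=
  {P | ∃ L : MvPolynomial (Fin d) ℝ →ₗ[ℝ] ℝ,
    L 1 = 1 ∧
    (∀ q : MvPolynomial (Fin d) ℝ, q.totalDegree ≤ 2 → 0 ≤ L (q ^ 2)) ∧
    (∀ q : MvPolynomial (Fin d) ℝ, q.totalDegree ≤ 1 →
      0 ≤ L ((MvPolynomial.C R - ∑ i, MvPolynomial.X i ^ 2) * q ^ 2)) ∧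
    P = fun p q => L (MvPolynomial.X p.1 * MvPolynomial.X p.2 *
        MvPolynomial.X q.1 * MvPolynomial.X q.2)}

/-- The Hanson–Wright property of a distribution ρ with mean μv and covariance S. -/
def HansonWright (ρ : Measure (Fin d → ℝ)) (μv : Fin d → ℝ)
    (S : Matrix (Fin d) (Fin d) ℝ) (CHW : ℝ) : Prop :=
  ∀ A : Matrix (Fin d) (Fin d) ℝ, ∀ t : ℝ, 0 < t →
    ρ {x | t ≤ |(∑ j, ∑ k, ((invSqrt S).mulVec (fun l => x l - μv l)) j * A j k *
        ((invSqrt S).mulVec (fun l => x l - μv l)) k) - A.trace|}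
      ≤ ENNReal.ofReal (2 * Real.exp (-(1 / CHW) *
          min (t ^ 2 / (frobNorm A) ^ 2) (t / specNorm A)))

/-- ε-corruption of an indexed family of points. -/
def Corruption {α : Type*} (n : ℕ) (ε : ℝ) (x y : Fin n → α) : Prop :=
  ∃ G : Finset (Fin n), (1 - ε) * (n : ℝ) ≤ (G.card : ℝ) ∧ ∀ i ∈ G, x i = y i

/-- Entries of the 4-tensor E[(xxᵀ − Id)^{⊗2}] of a measure μ on ℝ^d. -/
def tensorEnt (μ : Measure (Fin d → ℝ)) (i1 i2 i3 i4 : Fin d) : ℝ :=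
  ∫ x, (x i1 * x i2 - if i1 = i2 then (1 : ℝ) else 0) *
       (x i3 * x i4 - if i3 = i4 then (1 : ℝ) else 0) ∂μ

/-- E[(xxᵀ − Id)^{⊗2}] as a d²×d² matrix. -/
def tensorQ (μ : Measure (Fin d → ℝ)) : (Fin d × Fin d) → (Fin d × Fin d) → ℝ :=
  fun p q => tensorEnt μ p.1 p.2 q.1 q.2

/-!
As the mean is zero, `z = Σ^{-1/2} x` satisfies `zᵀ Σ z = ‖x‖²`, so the Hanson–Wright property
with `A = Σ` bounds the tail of `|‖x‖² - Tr Σ|` by `2 exp (-min (t²/‖Σ‖_F², t/‖Σ‖) / C)`.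
Large effective rank gives `‖Σ‖ ≤ Tr Σ / (c d)` and `‖Σ‖_F ≤ √d ‖Σ‖`, so both norms are at
most `L = Tr Σ / (c √d)`. Since `min (u², u) ≥ u - 1/4`, the tail is then at most
`K exp (-t / (C L))` with `K = 2 exp (1 / (4 C))`, and integrating it against `p t^(p-1)` is a
Gamma integral: `E |‖x‖² - Tr Σ|^p ≤ K p! (C L)^p ≤ (K p C L)^p`.
-/

theorem lintegral_rpow_le_of_meas_le_mul_exp {α : Type*} [MeasurableSpace α] {μ : Measure α}
    {f : α → ℝ} (hf : 0 ≤ᵐ[μ] f) (hfm : AEMeasurable f μ) {p K b : ℝ} (hp : 0 < p)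
    (hK : 0 ≤ K) (hb : 0 < b)
    (htail : ∀ t > 0, μ {x | t ≤ f x} ≤ ENNReal.ofReal (K * exp (-(t / b)))) :
    ∫⁻ x, ENNReal.ofReal (f x ^ p) ∂μ ≤ ENNReal.ofReal (K * Gamma (p + 1) * b ^ p) := by
  have hGamma : ∫ t in Set.Ioi (0 : ℝ), t ^ (p - 1) * exp (-(b⁻¹ * t)) = b ^ p * Gamma p := by
    rw [integral_rpow_mul_exp_neg_mul_Ioi hp (inv_pos.2 hb), one_div, inv_inv]
  have hint : IntegrableOn (fun t : ℝ => t ^ (p - 1) * exp (-(b⁻¹ * t))) (Set.Ioi 0) :=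
    Integrable.of_integral_ne_zero (by rw [hGamma]; positivity)
  have hpoint : ∀ t > 0, μ {x | t ≤ f x} * ENNReal.ofReal (t ^ (p - 1))
      ≤ ENNReal.ofReal K * ENNReal.ofReal (t ^ (p - 1) * exp (-(b⁻¹ * t))) := fun t ht =>
    calc μ {x | t ≤ f x} * ENNReal.ofReal (t ^ (p - 1))
        ≤ ENNReal.ofReal (K * exp (-(t / b))) * ENNReal.ofReal (t ^ (p - 1)) :=
          mul_le_mul_left (htail t ht) _
      _ = ENNReal.ofReal K * ENNReal.ofReal (t ^ (p - 1) * exp (-(b⁻¹ * t))) := by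
          rw [← ENNReal.ofReal_mul (by positivity), ← ENNReal.ofReal_mul hK, inv_mul_eq_div]
          congr 1
          ring
  rw [lintegral_rpow_eq_lintegral_meas_le_mul μ hf hfm hp]
  calc ENNReal.ofReal p * ∫⁻ t in Set.Ioi 0, μ {x | t ≤ f x} * ENNReal.ofReal (t ^ (p - 1))
      ≤ ENNReal.ofReal p * ∫⁻ t in Set.Ioi 0,
          ENNReal.ofReal K * ENNReal.ofReal (t ^ (p - 1) * exp (-(b⁻¹ * t))) :=
        mul_le_mul_right (setLIntegral_mono' measurableSet_Ioi hpoint) _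
    _ = ENNReal.ofReal (p * (K * (b ^ p * Gamma p))) := by
        rw [lintegral_const_mul' _ _ ENNReal.ofReal_ne_top, ← hGamma,
          ← ofReal_integral_eq_lintegral_ofReal hint, ← ENNReal.ofReal_mul hK,
          ← ENNReal.ofReal_mul hp.le]
        filter_upwards [self_mem_ae_restrict measurableSet_Ioi] with t ht
        exact mul_nonneg (rpow_nonneg (le_of_lt ht) _) (exp_pos _).le
    _ = ENNReal.ofReal (K * Gamma (p + 1) * b ^ p) := by
        rw [Gamma_add_one hp.ne']
        congr 1
        ring

theorem integral_pow_rpow_inv_le_of_meas_le_mul_exp {α : Type*} [MeasurableSpace α]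
    {μ : Measure α} {f : α → ℝ} (hf : 0 ≤ᵐ[μ] f) (hfm : AEMeasurable f μ) {K b : ℝ}
    (hK : 1 ≤ K) (hb : 0 < b)
    (htail : ∀ t > 0, μ {x | t ≤ f x} ≤ ENNReal.ofReal (K * exp (-(t / b)))) {p : ℕ}
    (hp : 0 < p) :
    (∫ x, f x ^ p ∂μ) ^ (p : ℝ)⁻¹ ≤ K * p * b := by
  have hmoment : K * p.factorial * b ^ p ≤ (K * p * b) ^ p := by
    rw [mul_pow, mul_pow]
    gcongr
    · exact le_self_pow₀ hK hp.ne'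
    · exact_mod_cast p.factorial_le_pow
  have hlint := lintegral_rpow_le_of_meas_le_mul_exp hf hfm (Nat.cast_pos.2 hp)
    (zero_le_one.trans hK) hb htail
  simp only [rpow_natCast, Gamma_nat_eq_factorial] at hlint
  have hint : ∫ x, f x ^ p ∂μ ≤ (K * p * b) ^ p := by
    rw [integral_eq_lintegral_of_nonneg_ae (hf.mono fun x hx => pow_nonneg hx p)
      (hfm.pow_const p).aestronglyMeasurable]
    exact ENNReal.toReal_le_of_le_ofReal (by positivity)
      (hlint.trans (ENNReal.ofReal_le_ofReal hmoment))
  calc (∫ x, f x ^ p ∂μ) ^ (p : ℝ)⁻¹ ≤ ((K * p * b) ^ p) ^ (p : ℝ)⁻¹ :=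
        rpow_le_rpow (integral_nonneg_of_ae (hf.mono fun x hx => pow_nonneg hx p)) hint
          (by positivity)
    _ = K * p * b := pow_rpow_inv_natCast (by positivity) hp.ne'

theorem sum_sq_mulVec_le_specNorm_sq (A : Matrix (Fin d) (Fin d) ℝ) (v : Fin d → ℝ) :
    ∑ j, (A *ᵥ v) j ^ 2 ≤ specNorm A ^ 2 * ∑ j, v j ^ 2 := by
  have hnorm : ∀ w : Fin d → ℝ, ‖WithLp.toLp 2 w‖ ^ 2 = ∑ j, w j ^ 2 := fun w => by
    simp [EuclideanSpace.norm_sq_eq]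
  rw [← hnorm, ← hnorm, ← mul_pow]
  exact pow_le_pow_left₀ (norm_nonneg _)
    ((LinearMap.toContinuousLinearMap (toEuclideanLin A)).le_opNorm (WithLp.toLp 2 v)) 2

theorem sum_sq_col_le_specNorm_sq (A : Matrix (Fin d) (Fin d) ℝ) (i : Fin d) :
    ∑ j, A j i ^ 2 ≤ specNorm A ^ 2 := by
  simpa [mulVec_single_one, Pi.single_apply] using
    sum_sq_mulVec_le_specNorm_sq A (Pi.single i 1)

theorem frobNorm_sq_le (A : Matrix (Fin d) (Fin d) ℝ) : frobNorm A ^ 2 ≤ d * specNorm A ^ 2 := by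
  rw [frobNorm, sq_sqrt (by positivity), Finset.sum_comm]
  simpa using Finset.sum_le_sum fun i (_ : i ∈ univ) => sum_sq_col_le_specNorm_sq A i

theorem frobNorm_pos {A : Matrix (Fin d) (Fin d) ℝ} (hA : A ≠ 0) : 0 < frobNorm A := by
  refine sqrt_pos.2 (lt_of_le_of_ne (by positivity) fun h => hA ?_)
  ext i j
  have := (Finset.sum_eq_zero_iff_of_nonneg fun i _ => by positivity).1 h.symm i (mem_univ i)
  simpa using (Finset.sum_eq_zero_iff_of_nonneg fun j _ => sq_nonneg (A i j)).1 this j (mem_univ j)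

theorem matSqrt_transpose (S : Matrix (Fin d) (Fin d) ℝ) : (matSqrt S)ᵀ = matSqrt S := by
  unfold matSqrt
  split_ifs
  · simp [transpose_mul, star_eq_conjTranspose, conjTranspose_eq_transpose_of_trivial, mul_assoc]
  · rfl

theorem matSqrt_mul_self {S : Matrix (Fin d) (Fin d) ℝ} (hS : S.PosSemidef) :
    matSqrt S * matSqrt S = S := by
  set U : Matrix (Fin d) (Fin d) ℝ := hS.1.eigenvectorUnitary.1
  have hUU : star U * U = 1 := Unitary.coe_star_mul_self _
  have hDD : diagonal (sqrt ∘ hS.1.eigenvalues) * diagonal (sqrt ∘ hS.1.eigenvalues)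
      = diagonal (RCLike.ofReal ∘ hS.1.eigenvalues) := by
    rw [diagonal_mul_diagonal]
    congr 1
    funext i
    simp [mul_self_sqrt (hS.eigenvalues_nonneg i)]
  have hspec := hS.1.spectral_theorem
  rw [Unitary.conjStarAlgAut_apply] at hspec
  rw [matSqrt, dif_pos hS]
  calc _ = U * (diagonal (sqrt ∘ hS.1.eigenvalues) * (star U * U) *
        diagonal (sqrt ∘ hS.1.eigenvalues)) * star U := by simp only [U, mul_assoc]
    _ = S := by rw [hUU, mul_one, hDD]; exact hspec.symm

theorem quadForm_invSqrt_mulVec {S : Matrix (Fin d) (Fin d) ℝ} (hS : S.PosDef) (x : Fin d → ℝ) :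
    ∑ j, ∑ k, (invSqrt S *ᵥ x) j * S j k * (invSqrt S *ᵥ x) k = ∑ i, x i ^ 2 := by
  set R := matSqrt S
  have hRR : R * R = S := matSqrt_mul_self hS.posSemidef
  have hdet : IsUnit R.det := by
    rw [isUnit_iff_ne_zero]
    intro h
    have := hS.det_pos
    rw [← hRR, det_mul, h, mul_zero] at this
    exact lt_irrefl 0 this
  have hz : R *ᵥ (invSqrt S *ᵥ x) = x := by
    rw [invSqrt, mulVec_mulVec, mul_nonsing_inv R hdet, one_mulVec]
  calc ∑ j, ∑ k, (invSqrt S *ᵥ x) j * S j k * (invSqrt S *ᵥ x) k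
      = (invSqrt S *ᵥ x) ⬝ᵥ (R *ᵥ (R *ᵥ (invSqrt S *ᵥ x))) := by
        rw [mulVec_mulVec, hRR]
        simp only [dotProduct, mulVec, Finset.mul_sum, mul_assoc]
    _ = x ⬝ᵥ x := by
        rw [hz, dotProduct_mulVec, ← mulVec_transpose, matSqrt_transpose, hz]
    _ = ∑ i, x i ^ 2 := by simp [dotProduct, sq]

theorem HansonWright.meas_le_abs_sum_sq_sub_trace {ρ : Measure (Fin d → ℝ)}
    {S : Matrix (Fin d) (Fin d) ℝ} {C : ℝ} (hHW : HansonWright ρ (fun _ => 0) S C)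
    (hS : S.PosDef) {t : ℝ} (ht : 0 < t) :
    ρ {x | t ≤ |∑ i, x i ^ 2 - S.trace|}
      ≤ ENNReal.ofReal (2 * exp (-(1 / C) * min (t ^ 2 / frobNorm S ^ 2) (t / specNorm S))) := by
  simpa only [sub_zero, quadForm_invSqrt_mulVec hS] using hHW S t ht

theorem exp_neg_inv_mul_min_le {C F s L t : ℝ} (hC : 0 < C) (hF : 0 < F) (hFL : F ≤ L)
    (hs : 0 < s) (hsL : s ≤ L) (ht : 0 ≤ t) :
    exp (-(1 / C) * min (t ^ 2 / F ^ 2) (t / s)) ≤ exp (1 / (4 * C)) * exp (-(t / (C * L))) := by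
  have hL : 0 < L := hs.trans_le hsL
  have hmin : t / L - 1 / 4 ≤ min (t ^ 2 / F ^ 2) (t / s) := by
    refine le_min ?_ ?_
    · calc t / L - 1 / 4 ≤ (t / L) ^ 2 := by nlinarith [sq_nonneg (t / L - 1 / 2)]
        _ = t ^ 2 / L ^ 2 := div_pow t L 2
        _ ≤ t ^ 2 / F ^ 2 := by gcongr
    · calc t / L - 1 / 4 ≤ t / L := by linarith
        _ ≤ t / s := by gcongr
  rw [← exp_add, exp_le_exp]
  have := mul_le_mul_of_nonneg_left hmin (one_div_pos.2 hC).le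
  calc -(1 / C) * min (t ^ 2 / F ^ 2) (t / s) ≤ -(1 / C * (t / L - 1 / 4)) := by linarith
    _ = 1 / (4 * C) + -(t / (C * L)) := by field_simp; ring

section EffectiveRank

variable {c : ℝ} {S : Matrix (Fin d) (Fin d) ℝ}

theorem specNorm_pos_of_le_erk (hc : 0 < c) (hd : 0 < d) (h : c * d ≤ erk S) :
    0 < specNorm S := by
  refine lt_of_le_of_ne (norm_nonneg _) fun h0 => ?_
  rw [erk, ← h0, div_zero] at h
  exact (mul_pos hc (Nat.cast_pos.2 hd)).not_ge h

theorem mul_specNorm_le_trace_of_le_erk (hc : 0 < c) (hd : 0 < d) (h : c * d ≤ erk S) :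
    c * d * specNorm S ≤ S.trace :=
  (le_div_iff₀ (specNorm_pos_of_le_erk hc hd h)).1 h

theorem specNorm_le_of_le_erk (hc : 0 < c) (hd : 0 < d) (h : c * d ≤ erk S) :
    specNorm S ≤ S.trace / (c * √d) := by
  have hsd : √d ≤ d := sqrt_le_self_iff.2 (Or.inr (by exact_mod_cast hd))
  rw [le_div_iff₀ (by positivity)]
  calc specNorm S * (c * √d) ≤ c * d * specNorm S := by
        nlinarith [mul_nonneg (mul_nonneg (specNorm_pos_of_le_erk hc hd h).le hc.le)
          (sub_nonneg.2 hsd)]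
    _ ≤ S.trace := mul_specNorm_le_trace_of_le_erk hc hd h

theorem trace_pos_of_le_erk (hc : 0 < c) (hd : 0 < d) (h : c * d ≤ erk S) : 0 < S.trace := by
  have hs := specNorm_pos_of_le_erk hc hd h
  exact lt_of_lt_of_le (by positivity) (mul_specNorm_le_trace_of_le_erk hc hd h)

theorem frobNorm_le_of_le_erk (hc : 0 < c) (hd : 0 < d) (h : c * d ≤ erk S) :
    frobNorm S ≤ S.trace / (c * √d) := by
  have hs := specNorm_pos_of_le_erk hc hd h
  have hT := trace_pos_of_le_erk hc hd h
  have hd' : (0 : ℝ) < d := Nat.cast_pos.2 hd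
  refine le_of_pow_le_pow_left₀ two_ne_zero (by positivity) ?_
  calc frobNorm S ^ 2 ≤ d * specNorm S ^ 2 := frobNorm_sq_le S
    _ ≤ d * (S.trace / (c * d)) ^ 2 := by
        gcongr
        rw [le_div_iff₀ (by positivity)]
        linarith [mul_specNorm_le_trace_of_le_erk hc hd h]
    _ = (S.trace / (c * √d)) ^ 2 := by
        rw [div_pow, div_pow, mul_pow, mul_pow, sq_sqrt hd'.le]
        field_simp

end EffectiveRank

theorem HansonWright.meas_le_abs_sum_sq_sub_trace_le_exp {ρ : Measure (Fin d → ℝ)}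
    {S : Matrix (Fin d) (Fin d) ℝ} {C c : ℝ} (hHW : HansonWright ρ (fun _ => 0) S C)
    (hS : S.PosDef) (hC : 0 < C) (hc : 0 < c) (hd : 0 < d) (herk : c * d ≤ erk S) {t : ℝ}
    (ht : 0 < t) :
    ρ {x | t ≤ |∑ i, x i ^ 2 - S.trace|}
      ≤ ENNReal.ofReal (2 * exp (1 / (4 * C)) * exp (-(t / (C * (S.trace / (c * √d)))))) := by
  have hs := specNorm_pos_of_le_erk hc hd herk
  have hS0 : S ≠ 0 := by
    rintro rfl
    simp [specNorm] at hs
  refine (hHW.meas_le_abs_sum_sq_sub_trace hS ht).trans (ENNReal.ofReal_le_ofReal ?_)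
  rw [mul_assoc]
  exact mul_le_mul_of_nonneg_left (exp_neg_inv_mul_min_le hC (frobNorm_pos hS0)
    (frobNorm_le_of_le_erk hc hd herk) hs (specNorm_le_of_le_erk hc hd herk) ht.le) zero_le_two

/-- moment bound for the squared norm of a Hanson–Wright
distribution with large effective rank. -/
theorem hanson_wright_norm_moments :
    ∀ c CHW : ℝ, 0 < c → 0 < CHW →
      ∃ C' : ℝ, 0 < C' ∧
        ∀ (d : ℕ) (ρ : Measure (Fin d → ℝ)), IsProbabilityMeasure ρ → 0 < d →
          meanVec ρ = 0 →
          (covMatrix ρ).PosDef →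
          HansonWright ρ (fun _ => 0) (covMatrix ρ) CHW →
          c * (d : ℝ) ≤ erk (covMatrix ρ) →
          ∀ p : ℕ, Even p → 0 < p →
            (∫ x, |(∑ i, (x i) ^ 2) - (covMatrix ρ).trace| ^ p ∂ρ) ^ ((p : ℝ)⁻¹)
              ≤ C' * (covMatrix ρ).trace * (p : ℝ) / Real.sqrt d := by
  intro c CHW hc hCHW
  refine ⟨2 * exp (1 / (4 * CHW)) * CHW / c, by positivity, ?_⟩
  intro d ρ _ hd _ hS hHW herk p _ hp
  have hT := trace_pos_of_le_erk hc hd herk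
  have hK : 1 ≤ 2 * exp (1 / (4 * CHW)) := by
    linarith [one_le_exp (show 0 ≤ 1 / (4 * CHW) by positivity)]
  calc (∫ x, |(∑ i, (x i) ^ 2) - (covMatrix ρ).trace| ^ p ∂ρ) ^ ((p : ℝ)⁻¹)
      ≤ 2 * exp (1 / (4 * CHW)) * p * (CHW * ((covMatrix ρ).trace / (c * √d))) :=
        integral_pow_rpow_inv_le_of_meas_le_mul_exp (ae_of_all _ fun _ => abs_nonneg _)
          (Measurable.aemeasurable (by fun_prop)) hK (by positivity)
          (fun t ht => hHW.meas_le_abs_sum_sq_sub_trace_le_exp hS hCHW hc hd herk ht) hp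
    _ = 2 * exp (1 / (4 * CHW)) * CHW / c * (covMatrix ρ).trace * p / √d := by
        field_simp

end Paper
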